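/- Let L be a 2-complex and K a subcomplex. If every spherical diagram over K has a folding vertex (K is vertex aspherical), and every spherical diagram f: C → L with image not contained in K has a folding vertex whose folding pair of 2-cells lies in L − K (L is VA relative to K), then every spherical diagram over L has a folding vertex (L is vertex aspherical). -/

import Mathlib

set_option autoImplicit false
set_option linter.unusedVariables false

open scoped Classical

/-- A combinatorial 2-complex: vertices, oriented edges with a fixed-point free
orientation-reversing involution `bar`, and 2-cells attached along closed edge paths. -/
structure TwoComplex where
  V : Type
  E : Type
  bar : E → E
  bar_bar : ∀ e, bar (bar e) = e
  bar_ne : ∀ e, bar e ≠ e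
  ini : E → V
  F : Type
  att : F → List E
  att_pos : ∀ d, 0 < (att d).length
  att_closed : ∀ (d : F) (i : Fin (att d).length),
      ini (bar ((att d).get i)) =
        ini ((att d).get ⟨((i : ℕ) + 1) % (att d).length, Nat.mod_lt _ (att_pos d)⟩)

namespace TwoComplex

variable (L : TwoComplex)

/-- Terminal vertex of an oriented edge. -/
def ter (e : L.E) : L.V := L.ini (L.bar e)

/-- Connectivity of the underlying 1-skeleton. -/
def Conn : Prop :=
  ∀ u v : L.V, Relation.ReflTransGen (fun a b => ∃ e : L.E, L.ini e = a ∧ L.ter e = b) u v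

/-- A corner of a 2-cell: a 2-cell together with a position in its boundary path.
The corner `⟨d, i⟩` sits between the `i`-th and `(i+1)`-th boundary edges. -/
def Cor : Type := Σ d : L.F, Fin (L.att d).length

/-- The boundary edge entering the corner. -/
def corA (c : L.Cor) : L.E := (L.att c.1).get c.2

/-- The boundary edge leaving the corner. -/
def corB (c : L.Cor) : L.E :=
  (L.att c.1).get ⟨((c.2 : ℕ) + 1) % (L.att c.1).length, Nat.mod_lt _ (L.att_pos c.1)⟩

/-- The vertex at which a corner sits. -/
def corV (c : L.Cor) : L.V := L.ini (L.corB c)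

/-- An oriented edge lies on the boundary of some 2-cell. -/
def OnFace (e : L.E) : Prop := ∃ d : L.F, e ∈ L.att d

/-- A combinatorial (cell-structured) 2-sphere: finite, connected, every oriented edge
occurs exactly once among the boundaries of the 2-cells (closed oriented surface),
and the Euler characteristic is 2. -/
def IsSphere : Prop :=
  Finite L.V ∧ Finite L.E ∧ Finite L.F ∧ Nonempty L.F ∧ L.Conn ∧
    (∀ e : L.E, ∃! c : L.Cor, L.corA c = e) ∧
    2 * (Nat.card L.V + Nat.card L.F) = Nat.card L.E + 4

/-- A combinatorial (cell-structured) disc: finite, connected, every oriented edge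
occurs at most once among the boundaries of the 2-cells, Euler characteristic 1. -/
def IsDisc : Prop :=
  Finite L.V ∧ Finite L.E ∧ Finite L.F ∧ L.Conn ∧
    (∀ c c' : L.Cor, L.corA c = L.corA c' → c = c') ∧
    2 * (Nat.card L.V + Nat.card L.F) = Nat.card L.E + 2

/-- A closed edge path. -/
def ClosedPath (w : List L.E) : Prop :=
  ∃ h : 0 < w.length, ∀ i : Fin w.length,
    L.ter (w.get i) = L.ini (w.get ⟨((i : ℕ) + 1) % w.length, Nat.mod_lt _ h⟩)

/-- The boundary cycle of a disc: a closed edge path without repetitions consisting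
exactly of those oriented edges having a 2-cell only on one side. -/
def IsBoundaryCycle (bd : List L.E) : Prop :=
  L.ClosedPath bd ∧ bd.Nodup ∧
    ∀ e : L.E, e ∈ bd ↔ (¬ L.OnFace e ∧ L.OnFace (L.bar e))

/-- All attaching maps are cyclically reduced. -/
def CyclicallyReduced : Prop := ∀ c : L.Cor, L.corB c ≠ L.bar (L.corA c)

/-- A free edge: it occurs (in either orientation) exactly once in the boundary of the 2-cells. -/
def FreeEdge (e : L.E) : Prop :=
  ∃! c : L.Cor, L.corA c = e ∨ L.corA c = L.bar e

/-- A closed 2-complex has no free edges. -/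
def IsClosed : Prop := ∀ e : L.E, ¬ L.FreeEdge e

/-- A combinatorial closed orientable surface: finite and every oriented edge occurs
exactly once among the boundaries of the 2-cells. -/
def IsClosedOrientedSurface : Prop :=
  Finite L.V ∧ Finite L.E ∧ Finite L.F ∧ Nonempty L.F ∧
    (∀ e : L.E, ∃! c : L.Cor, L.corA c = e)

end TwoComplex

/-- A combinatorial map between 2-complexes (maps open cells homeomorphically to open cells). -/
structure CombMap (C L : TwoComplex) where
  mapV : C.V → L.V
  mapE : C.E → L.E
  mapF : C.F → L.F
  map_bar : ∀ e, mapE (C.bar e) = L.bar (mapE e)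
  map_ini : ∀ e, mapV (C.ini e) = L.ini (mapE e)
  map_att : ∀ d, (C.att d).map mapE = L.att (mapF d)

/-- A subcomplex of a 2-complex. -/
structure Subcomplex (L : TwoComplex) where
  vs : Set L.V
  es : Set L.E
  fs : Set L.F
  bar_mem : ∀ e, e ∈ es → L.bar e ∈ es
  ini_mem : ∀ e, e ∈ es → L.ini e ∈ vs
  att_mem : ∀ d, d ∈ fs → ∀ e, e ∈ L.att d → e ∈ es

/-- The whole complex as a subcomplex of itself. -/
def Subcomplex.top (L : TwoComplex) : Subcomplex L :=
  ⟨Set.univ, Set.univ, Set.univ, fun _ _ => Set.mem_univ _, fun _ _ => Set.mem_univ _,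
    fun _ _ _ _ => Set.mem_univ _⟩

/-- A full subcomplex: every 2-cell all of whose boundary edges lie in the subcomplex
belongs to the subcomplex. -/
def Subcomplex.Full {L : TwoComplex} (K : Subcomplex L) : Prop :=
  ∀ d : L.F, (∀ e ∈ L.att d, e ∈ K.es) → d ∈ K.fs

/-- The image of a combinatorial map is contained in a subcomplex. -/
def MapsInto {C L : TwoComplex} (f : CombMap C L) (K : Subcomplex L) : Prop :=
  (∀ v, f.mapV v ∈ K.vs) ∧ (∀ e, f.mapE e ∈ K.es) ∧ (∀ d, f.mapF d ∈ K.fs)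

/-- The corners `c₁, c₂` of the diagram `f : C → L` form a folding pair at the vertex `v`:
they map to the same corner of `L` with cancelling orientations. -/
def FoldingPairAt {C L : TwoComplex} (f : CombMap C L) (v : C.V) (c₁ c₂ : C.Cor) : Prop :=
  C.corV c₁ = v ∧ C.corV c₂ = v ∧ c₁ ≠ c₂ ∧
    f.mapF c₁.1 = f.mapF c₂.1 ∧
    f.mapE (C.corA c₁) = L.bar (f.mapE (C.corB c₂)) ∧
    f.mapE (C.corB c₁) = L.bar (f.mapE (C.corA c₂))

/-- A folding vertex of a diagram. -/
def FoldingVertex {C L : TwoComplex} (f : CombMap C L) (v : C.V) : Prop :=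
  ∃ c₁ c₂, FoldingPairAt f v c₁ c₂

/-- The edge `e` of the diagram `f : C → L` is a folding edge, witnessed by the corners
`c₁, c₂` of the two 2-cells adjacent along `e`, which map to the same 2-cell of `L`
matched along `f(e)` with cancelling orientations. -/
def FoldingEdgeAt {C L : TwoComplex} (f : CombMap C L) (e : C.E) (c₁ c₂ : C.Cor) : Prop :=
  C.corB c₁ = e ∧ C.corA c₂ = C.bar e ∧ c₁ ≠ c₂ ∧
    f.mapF c₁.1 = f.mapF c₂.1 ∧
    f.mapE (C.corA c₁) = L.bar (f.mapE (C.corB c₂))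

/-- A folding edge of a diagram. -/
def FoldingEdge {C L : TwoComplex} (f : CombMap C L) (e : C.E) : Prop :=
  ∃ c₁ c₂, FoldingEdgeAt f e c₁ c₂

/-- A diagram is vertex reduced if it has no folding vertex. -/
def VertexReduced {C L : TwoComplex} (f : CombMap C L) : Prop := ¬ ∃ v, FoldingVertex f v

/-- A diagram is reduced if it has no folding edge. -/
def Reduced {C L : TwoComplex} (f : CombMap C L) : Prop := ¬ ∃ e, FoldingEdge f e

/-- `L` is vertex aspherical: every spherical diagram over `L` has a folding vertex. -/
def VAabs (L : TwoComplex) : Prop :=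
  ∀ (C : TwoComplex) (f : CombMap C L), C.IsSphere → ∃ v, FoldingVertex f v

/-- The subcomplex `K` is vertex aspherical: every spherical diagram over `L` with image in `K`
(i.e. every spherical diagram over `K`) has a folding vertex. -/
def SubVA {L : TwoComplex} (K : Subcomplex L) : Prop :=
  ∀ (C : TwoComplex) (f : CombMap C L), C.IsSphere → MapsInto f K → ∃ v, FoldingVertex f v

/-- `L` is VA relative to `K`: every spherical diagram over `L` whose image is not contained
in `K` has a folding vertex whose folding pair of 2-cells lies in `L − K`. -/
def VArel (L : TwoComplex) (K : Subcomplex L) : Prop :=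
  ∀ (C : TwoComplex) (f : CombMap C L), C.IsSphere → ¬ MapsInto f K →
    ∃ v c₁ c₂, FoldingPairAt f v c₁ c₂ ∧ f.mapF c₁.1 ∉ K.fs ∧ f.mapF c₂.1 ∉ K.fs

/-- `L` is diagrammatically reducible. -/
def DRabs (L : TwoComplex) : Prop :=
  ∀ (C : TwoComplex) (f : CombMap C L), C.IsSphere → ∃ e, FoldingEdge f e

/-- The subcomplex `K` is diagrammatically reducible. -/
def SubDR {L : TwoComplex} (K : Subcomplex L) : Prop :=
  ∀ (C : TwoComplex) (f : CombMap C L), C.IsSphere → MapsInto f K → ∃ e, FoldingEdge f e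

/-- `L` is DR relative to `K`: every spherical diagram over `L` whose image is not contained
in `K` has a folding edge whose adjacent pair of 2-cells lies in `L − K`. -/
def DRrel (L : TwoComplex) (K : Subcomplex L) : Prop :=
  ∀ (C : TwoComplex) (f : CombMap C L), C.IsSphere → ¬ MapsInto f K →
    ∃ e c₁ c₂, FoldingEdgeAt f e c₁ c₂ ∧ f.mapF c₁.1 ∉ K.fs ∧ f.mapF c₂.1 ∉ K.fs

/-- `L` is DR directed away from the edge set `Y`: every spherical diagram containing an edge
labeled outside `Y` has a folding edge labeled outside `Y`. -/
def DRdirAway (L : TwoComplex) (Y : Set L.E) : Prop :=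
  ∀ (C : TwoComplex) (f : CombMap C L), C.IsSphere →
    (∃ e, f.mapE e ∉ Y) → ∃ e, FoldingEdge f e ∧ f.mapE e ∉ Y

/-- The subcomplex `K_Y` spanned by a bar-closed edge set `Y`: it contains exactly those
2-cells all of whose boundary edges lie in `Y`. -/
def TwoComplex.subOf (L : TwoComplex) (Y : Set L.E) (hbar : ∀ e ∈ Y, L.bar e ∈ Y) :
    Subcomplex L where
  vs := Set.univ
  es := Y
  fs := {d | ∀ e ∈ L.att d, e ∈ Y}
  bar_mem := hbar
  ini_mem := fun _ _ => Set.mem_univ _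
  att_mem := fun d hd e he => hd e he

/-- The closed edge path `w` in `L` bounds a disc diagram mapping into the subcomplex `S`
(i.e. it represents the trivial element of `π₁(S)`). -/
def NullIn (L : TwoComplex) (S : Subcomplex L) (w : List L.E) : Prop :=
  ∃ (D : TwoComplex) (f : CombMap D L) (bd : List D.E),
    D.IsDisc ∧ D.IsBoundaryCycle bd ∧ bd.map f.mapE = w ∧ MapsInto f S

/-- The union of a finite family of subcomplexes. -/
def unionSub {L : TwoComplex} {n : ℕ} (Ks : Fin n → Subcomplex L) : Subcomplex L where
  vs := ⋃ i, (Ks i).vs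
  es := ⋃ i, (Ks i).es
  fs := ⋃ i, (Ks i).fs
  bar_mem := by
    intro e he
    rcases Set.mem_iUnion.1 he with ⟨i, hi⟩
    exact Set.mem_iUnion.2 ⟨i, (Ks i).bar_mem e hi⟩
  ini_mem := by
    intro e he
    rcases Set.mem_iUnion.1 he with ⟨i, hi⟩
    exact Set.mem_iUnion.2 ⟨i, (Ks i).ini_mem e hi⟩
  att_mem := by
    intro d hd e he
    rcases Set.mem_iUnion.1 hd with ⟨i, hi⟩
    exact Set.mem_iUnion.2 ⟨i, (Ks i).att_mem d hi e he⟩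

/-- The preimage of a subcomplex under a combinatorial map. -/
def Subcomplex.preimg {L' L : TwoComplex} (p : CombMap L' L) (K : Subcomplex L) :
    Subcomplex L' where
  vs := {v | p.mapV v ∈ K.vs}
  es := {e | p.mapE e ∈ K.es}
  fs := {d | p.mapF d ∈ K.fs}
  bar_mem := fun e he => by
    have := K.bar_mem _ he
    simpa [p.map_bar] using this
  ini_mem := fun e he => by
    have := K.ini_mem _ he
    simpa [p.map_ini] using this
  att_mem := fun d hd e he => by
    have : p.mapE e ∈ L.att (p.mapF d) := by
      rw [← p.map_att]; exact List.mem_map_of_mem he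
    exact K.att_mem _ hd _ this

/-- The union of a subcomplex with the whole 1-skeleton. -/
def unionOneSkel {L : TwoComplex} (S : Subcomplex L) : Subcomplex L :=
  ⟨Set.univ, Set.univ, S.fs, fun _ _ => Set.mem_univ _, fun _ _ => Set.mem_univ _,
    fun _ _ _ _ => Set.mem_univ _⟩

/-- An edge which is free in the subcomplex `M`. -/
def FreeEdgeIn (L : TwoComplex) (M : Subcomplex L) (e : L.E) : Prop :=
  e ∈ M.es ∧
    ∃! c : {c : L.Cor // c.1 ∈ M.fs}, L.corA c.1 = e ∨ L.corA c.1 = L.bar e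

/-- An elementary collapse between subcomplexes: remove a free edge together with the unique
2-cell containing it, or remove a free vertex together with the unique edge containing it. -/
def CollapseStep (L : TwoComplex) (M M' : Subcomplex L) : Prop :=
  (∃ (e : L.E) (d : L.F), d ∈ M.fs ∧ FreeEdgeIn L M e ∧
      (e ∈ L.att d ∨ L.bar e ∈ L.att d) ∧
      M'.fs = M.fs \ {d} ∧ M'.es = M.es \ {e, L.bar e} ∧ M'.vs = M.vs) ∨
  (∃ (v : L.V) (e : L.E), v ∈ M.vs ∧ e ∈ M.es ∧ L.ini e = v ∧ L.ter e ≠ v ∧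
      (∀ e' ∈ M.es, L.ini e' = v → e' = e) ∧
      (∀ d ∈ M.fs, e ∉ L.att d ∧ L.bar e ∉ L.att d) ∧
      M'.vs = M.vs \ {v} ∧ M'.es = M.es \ {e, L.bar e} ∧ M'.fs = M.fs)

/-- `M` collapses into `N`: a sequence of elementary collapses transforms `M` into a
subcomplex contained in `N`. -/
def CollapsesInto (L : TwoComplex) (M N : Subcomplex L) : Prop :=
  ∃ M' : Subcomplex L, Relation.ReflTransGen (CollapseStep L) M M' ∧
    M'.vs ⊆ N.vs ∧ M'.es ⊆ N.es ∧ M'.fs ⊆ N.fs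

/-- A combinatorial covering map: surjective, locally bijective on stars of vertices
and on corners. -/
def IsCovering {L' L : TwoComplex} (p : CombMap L' L) : Prop :=
  Function.Surjective p.mapV ∧
    (∀ (v' : L'.V) (e : L.E), L.ini e = p.mapV v' →
      ∃! e' : L'.E, L'.ini e' = v' ∧ p.mapE e' = e) ∧
    (∀ (e' : L'.E) (c : L.Cor), L.corB c = p.mapE e' →
      ∃! c' : L'.Cor, p.mapF c'.1 = c.1 ∧ L'.corB c' = e' ∧ ((c'.2 : ℕ) = (c.2 : ℕ)))

/-- A universal covering: a covering with connected, simply connected total complex. -/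
def IsUniversalCovering {L' L : TwoComplex} (p : CombMap L' L) : Prop :=
  IsCovering p ∧ L'.Conn ∧
    ∀ w : List L'.E, L'.ClosedPath w → NullIn L' (Subcomplex.top L') w

/-! ### Graphs -/

/-- A combinatorial graph with oriented edges. -/
structure CGraph where
  V : Type
  E : Type
  bar : E → E
  bar_bar : ∀ e, bar (bar e) = e
  bar_ne : ∀ e, bar e ≠ e
  ini : E → V

namespace CGraph

variable (G : CGraph)

def ter (e : G.E) : G.V := G.ini (G.bar e)

def ClosedPath (w : List G.E) : Prop :=
  ∃ h : 0 < w.length, ∀ i : Fin w.length,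
    G.ter (w.get i) = G.ini (w.get ⟨((i : ℕ) + 1) % w.length, Nat.mod_lt _ h⟩)

/-- A cycle: a nonempty closed cyclically reduced edge path. -/
def ReducedCycle (w : List G.E) : Prop :=
  G.ClosedPath w ∧ ∃ h : 0 < w.length, ∀ i : Fin w.length,
    w.get ⟨((i : ℕ) + 1) % w.length, Nat.mod_lt _ h⟩ ≠ G.bar (w.get i)

/-- A homology reduced cycle: a closed path containing no pair of opposite edges. -/
def HomReducedCycle (w : List G.E) : Prop :=
  G.ClosedPath w ∧ ∀ i j : Fin w.length, w.get j ≠ G.bar (w.get i)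

def IsForest : Prop := ¬ ∃ w, G.ReducedCycle w

def Conn : Prop :=
  ∀ u v : G.V, Relation.ReflTransGen (fun a b => ∃ e : G.E, G.ini e = a ∧ G.ter e = b) u v

def IsTree : Prop := G.Conn ∧ G.IsForest

end CGraph

/-- The quotient graph obtained by collapsing each of the disjoint subgraphs
`(Vs i, Es i)` to a single vertex. -/
def CGraph.quot {n : ℕ} (G : CGraph) (Vs : Fin n → Set G.V) (Es : Fin n → Set G.E)
    (hbar : ∀ i e, e ∈ Es i → G.bar e ∈ Es i) : CGraph where
  V := Quot (fun u v : G.V => ∃ i, u ∈ Vs i ∧ v ∈ Vs i)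
  E := {e : G.E // ∀ i, e ∉ Es i}
  bar := fun e => ⟨G.bar e.1, fun i h => e.2 i (by
    have := hbar i _ h
    rwa [G.bar_bar] at this)⟩
  bar_bar := fun e => Subtype.ext (G.bar_bar e.1)
  bar_ne := fun e h => G.bar_ne e.1 (congrArg Subtype.val h)
  ini := fun e => Quot.mk _ (G.ini e.1)

/-- The edge path `w` is trivial modulo the subgraph edges `hatE`: it reduces to the empty
path by deleting edges of `hatE`, cancelling adjacent inverse pairs, and cyclic rotation. -/
inductive TrivMod (G : CGraph) (hatE : Set G.E) : List G.E → Prop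
  | nil : TrivMod G hatE []
  | hatdel (l₁ l₂ : List G.E) (e : G.E) (he : e ∈ hatE) (h : TrivMod G hatE (l₁ ++ l₂)) :
      TrivMod G hatE (l₁ ++ e :: l₂)
  | cancel (l₁ l₂ : List G.E) (e : G.E) (h : TrivMod G hatE (l₁ ++ l₂)) :
      TrivMod G hatE (l₁ ++ e :: G.bar e :: l₂)
  | rot (l : List G.E) (e : G.E) (h : TrivMod G hatE (e :: l)) :
      TrivMod G hatE (l ++ [e])

/-- The link graph of a 2-complex. Its vertices are the edge germs (an oriented edge `e`
stands for its germ at its initial vertex) and its edges are the corners of the 2-cells.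
The corner `⟨d,i⟩` joins the germ of `bar (eᵢ)` to the germ of `e_{i+1}`. -/
def TwoComplex.LinkGraph (L : TwoComplex) : CGraph where
  V := L.E
  E := L.Cor × Bool
  bar := fun c => (c.1, !c.2)
  bar_bar := by intro c; simp
  bar_ne := fun c h => Bool.not_ne_self c.2 (congrArg Prod.snd h)
  ini := fun c => if c.2 then L.bar (L.corA c.1) else L.corB c.1

/-- The positive link of a 2-complex with respect to an orientation `pos` of its edges:
the full subgraph of the link graph on the germs lying in `pos`. -/
def TwoComplex.PosLink (L : TwoComplex) (pos : Set L.E) : CGraph where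
  V := {e : L.E // e ∈ pos}
  E := {cb : L.Cor × Bool // L.bar (L.corA cb.1) ∈ pos ∧ L.corB cb.1 ∈ pos}
  bar := fun cb => ⟨(cb.1.1, !cb.1.2), cb.2⟩
  bar_bar := fun cb => Subtype.ext (by simp)
  bar_ne := fun cb h => Bool.not_ne_self cb.1.2 (congrArg (fun x => x.1.2) h)
  ini := fun cb =>
    if cb.1.2 then ⟨L.bar (L.corA cb.1.1), cb.2.1⟩ else ⟨L.corB cb.1.1, cb.2.2⟩

/-! ### Presentations and their standard 2-complexes -/

/-- A word in generators and inverses. -/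
abbrev Word (X : Type) := List (X × Bool)

/-- The inverse of a word. -/
def wordInv {X : Type} (w : Word X) : Word X := (w.map (fun p => (p.1, !p.2))).reverse

/-- A word is cyclically reduced. -/
def CyclRedWord {X : Type} (r : Word X) : Prop :=
  ∃ h : 0 < r.length, ∀ i : Fin r.length,
    r.get ⟨((i : ℕ) + 1) % r.length, Nat.mod_lt _ h⟩ ≠ ((r.get i).1, !(r.get i).2)

/-- The standard 2-complex of a presentation: one vertex, one edge pair per generator,
one 2-cell per relator. -/
def PresCpx (X : Type) (R : List (Word X)) (hR : ∀ r ∈ R, r ≠ []) : TwoComplex where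
  V := Unit
  E := X × Bool
  bar := fun e => (e.1, !e.2)
  bar_bar := by intro e; simp
  bar_ne := fun e h => Bool.not_ne_self e.2 (congrArg Prod.snd h)
  ini := fun _ => ()
  F := Fin R.length
  att := fun i => R.get i
  att_pos := fun i => List.length_pos_iff.2 (hR _ (List.get_mem R i))
  att_closed := fun _ _ => rfl

/-- The relator set of a presentation inside the free group. -/
def presRels (X : Type) (R : List (Word X)) : Set (FreeGroup X) :=
  {g | ∃ r ∈ R, g = FreeGroup.mk r}

/-- `K` is DR in all directions: for every edge label `x`, every spherical diagram containing
an edge labeled `x` contains a folding edge labeled `x`. -/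
def DRinAll (K : TwoComplex) : Prop :=
  ∀ x : K.E, ∀ (C : TwoComplex) (f : CombMap C K), C.IsSphere →
    (∃ e, f.mapE e = x ∨ f.mapE e = K.bar x) →
    ∃ e, FoldingEdge f e ∧ (f.mapE e = x ∨ f.mapE e = K.bar x)

/-! ### Labeled oriented trees -/

/-- The relator word `x z (z y)⁻¹ = x z y⁻¹ z⁻¹` of a LOT edge from `x` to `y` labeled `z`. -/
def lotRel {V : Type} (e : V × V × V) : Word V :=
  [(e.1, true), (e.2.2, true), (e.2.1, false), (e.2.2, false)]

lemma lotRel_ne {V : Type} : ∀ r ∈ (fun (ed : List (V × V × V)) => ed.map lotRel) [], r ≠ [] := by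
  intro r hr; simp at hr

lemma lotRel_ne' {V : Type} (ed : List (V × V × V)) : ∀ r ∈ ed.map lotRel, r ≠ [] := by
  intro r hr
  rcases List.mem_map.1 hr with ⟨e, _, rfl⟩
  simp [lotRel]

/-- The LOT complex of a labeled oriented graph, given by its list of
(source, target, label) edges. -/
def lotCpx (V : Type) (ed : List (V × V × V)) : TwoComplex :=
  PresCpx V (ed.map lotRel) (lotRel_ne' ed)

/-- The underlying oriented graph of a labeled oriented graph. -/
def lotGraph (V : Type) (ed : List (V × V × V)) : CGraph where
  V := V
  E := Fin ed.length × Bool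
  bar := fun e => (e.1, !e.2)
  bar_bar := by intro e; simp
  bar_ne := fun e h => Bool.not_ne_self e.2 (congrArg Prod.snd h)
  ini := fun e => if e.2 then (ed.get e.1).1 else (ed.get e.1).2.1

/-- A labeled oriented graph is a LOT (labeled oriented tree) if its underlying graph
is a tree. -/
def IsLOT (V : Type) (ed : List (V × V × V)) : Prop := (lotGraph V ed).IsTree

/-- A labeled oriented graph is compressed: no edge is labeled by one of its own vertices. -/
def LOTCompressed (V : Type) (ed : List (V × V × V)) : Prop :=
  ∀ e ∈ ed, e.2.2 ≠ e.1 ∧ e.2.2 ≠ e.2.1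

/-- If the subcomplex `K` is vertex aspherical and `L` is VA relative
to `K`, then `L` is vertex aspherical. -/
theorem relative_VA_implies_VA (L : TwoComplex) (K : Subcomplex L)
    (hK : SubVA K) (hrel : VArel L K) : VAabs L := by
  intro C f hC
  by_cases h : MapsInto f K
  · exact hK C f hC h
  · obtain ⟨v, c₁, c₂, hfp, _, _⟩ := hrel C f hC h
    exact ⟨v, c₁, c₂, hfp⟩
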